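/- arXiv:2012.06661 — 2 statements merged into one kernel-verified Lean document; each statement's English description precedes it below -/
import Mathlib

section
/- For every positive integer m, the m-th term J_m of the lower central series of J(I(X,K)) (defined by J_1 = [I(X,K), I(X,K)] and J_m = [J_1, J_{m−1}]) equals Span_K{e_{xy} : l(⌊x,y⌋) ≥ m}, where l(⌊x,y⌋) is the maximal length of a chain in the interval from x to y; moreover J_m = J(I(X,K))^m, the m-th associative power of the radical. -/
set_option maxHeartbeats 1000000
set_option synthInstance.maxHeartbeats 400000

open Matrix

variable (K X : Type*) [Field K] [Fintype X] [PartialOrder X] [DecidableEq X]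

/-- The incidence algebra of a finite poset `X` over `K`, realized as the subalgebra of
matrices `f` with `f x y = 0` whenever `¬ x ≤ y`. -/
def IncAlg : Subalgebra K (Matrix X X K) where
  carrier := {f | ∀ x y : X, ¬ x ≤ y → f x y = 0}
  zero_mem' := fun _ _ _ => rfl
  add_mem' := fun {f g} hf hg x y h => by
    simp [Matrix.add_apply, hf x y h, hg x y h]
  one_mem' := fun x y h => Matrix.one_apply_ne fun he => h (le_of_eq he)
  mul_mem' := fun {f g} hf hg x y h => by
    rw [Matrix.mul_apply]
    refine Finset.sum_eq_zero fun k _ => ?_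
    by_cases hxk : x ≤ k
    · by_cases hky : k ≤ y
      · exact absurd (hxk.trans hky) h
      · rw [hg k y hky, mul_zero]
    · rw [hf x k hxk, zero_mul]
  algebraMap_mem' := fun c x y h => by
    rw [Matrix.algebraMap_matrix_apply]
    exact if_neg fun he => h (le_of_eq he)

variable {X} in
/-- The standard basis element `e_{xy}` of the incidence algebra, for `x ≤ y`. -/
def eE (x y : X) (h : x ≤ y) : IncAlg K X :=
  ⟨Matrix.single x y 1, by
    intro a b hab
    by_cases hxa : x = a
    · by_cases hyb : y = b
      · subst hxa; subst hyb; exact absurd h hab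
      · simp [Matrix.single, hyb]
    · simp [Matrix.single, hxa]⟩

variable {X} in
/-- The maximal length of a chain from `x` to `y` (the length `l(⌊x,y⌋)` of the interval). -/
noncomputable def chainLen (x y : X) : ℕ :=
  sSup {m | ∃ c : Fin (m + 1) → X, StrictMono c ∧ c 0 = x ∧ c (Fin.last m) = y}

/-- The Jacobson radical of the incidence algebra: the functions vanishing on the diagonal. -/
def radJ : Submodule K (Matrix X X K) :=
  Submodule.span K {f | f ∈ IncAlg K X ∧ ∀ x : X, f x x = 0}

/-- `Jm K X m` is `Span_K {e_{xy} : l(⌊x,y⌋) ≥ m}`, i.e. `J_m = J(I(X,K))^m` for `m ≥ 1`. -/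
noncomputable def Jm (m : ℕ) : Submodule K (Matrix X X K) :=
  Submodule.span K
    {E | ∃ x y : X, x ≤ y ∧ m ≤ chainLen x y ∧ E = Matrix.single x y (1 : K)}

/-- `Lm K X i` is `L_i = Span_K {e_{xy} : l(⌊x,y⌋) = i}`. -/
noncomputable def Lm (i : ℕ) : Submodule K (Matrix X X K) :=
  Submodule.span K
    {E | ∃ x y : X, x ≤ y ∧ chainLen x y = i ∧ E = Matrix.single x y (1 : K)}

/-- The two-sided ideal of `I(X,K)` generated by a subset `S`: the smallest `K`-subspace
containing `S` that is closed under left and right multiplication by elements of `I(X,K)`. -/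
def assocGen (S : Set (Matrix X X K)) : Submodule K (Matrix X X K) :=
  sInf {I | S ⊆ I ∧ ∀ f ∈ IncAlg K X, ∀ g ∈ I, f * g ∈ I ∧ g * f ∈ I}

/-- A poset is connected if any two points are joined by a sequence of comparabilities. -/
def PosetConnected (X : Type*) [PartialOrder X] : Prop :=
  ∀ a b : X, Relation.ReflTransGen (fun u v : X => u ≤ v ∨ v ≤ u) a b

variable {K X} in
/-- `φ` is a Lie automorphism of the incidence algebra. -/
def IsLieAut (φ : IncAlg K X ≃ₗ[K] IncAlg K X) : Prop :=
  ∀ a b : IncAlg K X, φ (a * b - b * a) = φ a * φ b - φ b * φ a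


/-- The lower central series of `I(X,K)`: `lcs 0 = J_1` is the derived ideal and
`lcs m = J_{m+1} = [J_1, J_m]`. -/
noncomputable def lcs (K X : Type*) [Field K] [Fintype X] [PartialOrder X] [DecidableEq X] :
    ℕ → Submodule K (Matrix X X K)
  | 0 => Submodule.span K
      {c : Matrix X X K | ∃ f ∈ IncAlg K X, ∃ g ∈ IncAlg K X, c = f * g - g * f}
  | m + 1 => Submodule.span K
      {c : Matrix X X K | ∃ f ∈ lcs K X 0, ∃ g ∈ lcs K X m, c = f * g - g * f}

/-- Associative powers of the Jacobson radical: `radPow m = J(I(X,K))^m` (with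
`radPow 0 = I(X,K)`). -/
noncomputable def radPow (K X : Type*) [Field K] [Fintype X] [PartialOrder X] [DecidableEq X] :
    ℕ → Submodule K (Matrix X X K)
  | 0 => Subalgebra.toSubmodule (IncAlg K X)
  | m + 1 => Submodule.span K
      {c : Matrix X X K | ∃ f ∈ radJ K X, ∃ g ∈ radPow K X m, c = f * g}


/-!
`Jm K X m` is the space of matrices supported on the pairs `x ≤ y` with `l(⌊x,y⌋) ≥ m`.
Chain length is superadditive along `x ≤ k ≤ y` (concatenate chains), so products and
commutators of elements of `Jm a` and `Jm b` lie in `Jm (a + b)`. Conversely, if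
`l(⌊x,y⌋) ≥ n + 1` and `k` is the second point of a maximal chain from `x` to `y`, then
`e_{xy} = e_{xk} e_{ky} = [e_{xk}, e_{ky}]` with `e_{xk} ∈ Jm 1` and `e_{ky} ∈ Jm n`.
Induction on `m` then identifies both the lower central series and the powers of the radical
with `Jm`, starting from `I(X,K) = Jm 0`, `J(I(X,K)) = Jm 1` and `[I(X,K), I(X,K)] = Jm 1`,
the last because commutators of incidence functions vanish on the diagonal.
-/

section ChainLength

variable {X : Type*} [PartialOrder X]

def chainLengths (x y : X) : Set ℕ :=
  {m | ∃ c : Fin (m + 1) → X, StrictMono c ∧ c 0 = x ∧ c (Fin.last m) = y}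

variable [Finite X]

lemma bddAbove_chainLengths (x y : X) : BddAbove (chainLengths x y) := by
  refine ⟨Nat.card X, fun m ⟨c, hc, _⟩ => ?_⟩
  have := Nat.card_le_card_of_injective c hc.injective
  simp only [Nat.card_eq_fintype_card, Fintype.card_fin] at this
  omega

lemma LTSeries.length_le_chainLen (p : LTSeries X) : p.length ≤ chainLen p.head p.last :=
  le_csSup (bddAbove_chainLengths _ _) ⟨p, p.strictMono, rfl, rfl⟩

lemma one_le_chainLen {x y : X} (h : x < y) : 1 ≤ chainLen x y :=
  LTSeries.length_le_chainLen ((RelSeries.singleton _ x : LTSeries X).snoc y h)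

lemma exists_ltSeries_length_eq_chainLen {x y : X} (hxy : x ≤ y) :
    ∃ p : LTSeries X, p.head = x ∧ p.last = y ∧ p.length = chainLen x y := by
  have hne : (chainLengths x y).Nonempty := by
    obtain rfl | hlt := hxy.eq_or_lt
    · exact ⟨0, _, LTSeries.strictMono (RelSeries.singleton _ x), rfl, rfl⟩
    · exact ⟨1, _, LTSeries.strictMono ((RelSeries.singleton _ x : LTSeries X).snoc y hlt),
        rfl, rfl⟩
  obtain ⟨c, hc, hc0, hcl⟩ := Nat.sSup_mem hne (bddAbove_chainLengths x y)
  exact ⟨LTSeries.mk _ c hc, hc0, hcl, rfl⟩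

lemma chainLen_self (x : X) : chainLen x x = 0 := by
  obtain ⟨p, hx, hx', hp⟩ := exists_ltSeries_length_eq_chainLen (le_refl x)
  by_contra h
  have : NeZero p.length := ⟨hp ▸ h⟩
  exact (p.strictMono Fin.last_pos').ne (hx.trans hx'.symm)

lemma le_and_one_le_chainLen_iff {x y : X} : x ≤ y ∧ 1 ≤ chainLen x y ↔ x < y := by
  refine ⟨fun ⟨hxy, h⟩ => hxy.lt_of_ne ?_, fun h => ⟨h.le, one_le_chainLen h⟩⟩
  rintro rfl
  simp [chainLen_self] at h

lemma chainLen_add_chainLen_le {x k y : X} (hxk : x ≤ k) (hky : k ≤ y) :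
    chainLen x k + chainLen k y ≤ chainLen x y := by
  obtain ⟨p, hp₀, hp₁, hp⟩ := exists_ltSeries_length_eq_chainLen hxk
  obtain ⟨q, hq₀, hq₁, hq⟩ := exists_ltSeries_length_eq_chainLen hky
  have := LTSeries.length_le_chainLen (p.smash q (hp₁.trans hq₀.symm))
  rwa [RelSeries.smash_length, RelSeries.head_smash, RelSeries.last_smash, hp₀, hq₁, hp, hq]
    at this

lemma exists_lt_le_chainLen {x y : X} {n : ℕ} (hxy : x ≤ y) (h : n + 1 ≤ chainLen x y) :
    ∃ k, x < k ∧ k ≤ y ∧ n ≤ chainLen k y := by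
  obtain ⟨p, hp₀, hp₁, hp⟩ := exists_ltSeries_length_eq_chainLen hxy
  have : NeZero p.length := ⟨by omega⟩
  have htail := LTSeries.length_le_chainLen (p.tail (NeZero.ne _))
  rw [RelSeries.head_tail, RelSeries.last_tail, RelSeries.tail_length, hp₁] at htail
  exact ⟨p 1, hp₀ ▸ p.strictMono Fin.one_pos', hp₁ ▸ p.monotone (Fin.le_last 1),
    by omega⟩

end ChainLength

namespace Matrix

variable (K : Type*) {X : Type*} [Semiring K]

def supportedOn (P : X → X → Prop) : Submodule K (Matrix X X K) where
  carrier := {f | ∀ x y, ¬ P x y → f x y = 0}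
  zero_mem' := fun _ _ _ => rfl
  add_mem' := fun hf hg x y h => by simp [hf x y h, hg x y h]
  smul_mem' := fun c f hf x y h => by simp [hf x y h]

variable {K} {P Q R : X → X → Prop}

@[simp]
lemma mem_supportedOn {f : Matrix X X K} :
    f ∈ supportedOn K P ↔ ∀ x y, ¬ P x y → f x y = 0 :=
  Iff.rfl

lemma single_one_mem_supportedOn [DecidableEq X] {x y : X} (h : P x y) :
    single x y (1 : K) ∈ supportedOn K P :=
  fun a b hab => single_apply_of_ne x y 1 a b fun ⟨hxa, hyb⟩ => hab (hxa ▸ hyb ▸ h)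

variable [Fintype X]

lemma mul_mem_supportedOn (hPQR : ∀ x k y, P x k → Q k y → R x y) {f g : Matrix X X K}
    (hf : f ∈ supportedOn K P) (hg : g ∈ supportedOn K Q) : f * g ∈ supportedOn K R := by
  intro x y hxy
  rw [mul_apply]
  refine Finset.sum_eq_zero fun k _ => ?_
  by_cases hxk : P x k
  · rw [hg k y fun hky => hxy (hPQR x k y hxk hky), mul_zero]
  · rw [hf x k hxk, zero_mul]

lemma span_single_one_eq_supportedOn [DecidableEq X] :
    Submodule.span K {E | ∃ x y, P x y ∧ E = single x y (1 : K)} = supportedOn K P := by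
  refine le_antisymm (Submodule.span_le.mpr ?_) fun f hf => ?_
  · rintro _ ⟨x, y, h, rfl⟩
    exact single_one_mem_supportedOn h
  rw [matrix_eq_sum_single f]
  refine Submodule.sum_mem _ fun x _ => Submodule.sum_mem _ fun y _ => ?_
  by_cases h : P x y
  · rw [← mul_one (f x y), ← smul_eq_mul, ← smul_single]
    exact Submodule.smul_mem _ _ (Submodule.subset_span ⟨x, y, h, rfl⟩)
  · rw [hf x y h, single_zero]
    exact Submodule.zero_mem _

end Matrix

section IncidenceAlgebra

variable {K X : Type*} [Field K] [PartialOrder X] [DecidableEq X]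

lemma Jm_antitone : Antitone (Jm K X) := fun _ _ hab =>
  Submodule.span_mono fun _ ⟨x, y, hxy, hb, hE⟩ => ⟨x, y, hxy, hab.trans hb, hE⟩

lemma single_one_mem_Jm {x y : X} {m : ℕ} (hxy : x ≤ y) (h : m ≤ chainLen x y) :
    single x y (1 : K) ∈ Jm K X m :=
  Submodule.subset_span ⟨x, y, hxy, h, rfl⟩

lemma Jm_le {m : ℕ} {S : Submodule K (Matrix X X K)}
    (h : ∀ x y, x ≤ y → m ≤ chainLen x y → single x y (1 : K) ∈ S) : Jm K X m ≤ S :=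
  Submodule.span_le.mpr fun _ ⟨x, y, hxy, hm, hE⟩ => hE ▸ h x y hxy hm

variable [Fintype X]

lemma Jm_eq_supportedOn (m : ℕ) :
    Jm K X m = supportedOn K fun x y => x ≤ y ∧ m ≤ chainLen x y := by
  rw [Jm, ← span_single_one_eq_supportedOn]
  simp only [and_assoc]

lemma Jm_zero : Jm K X 0 = Subalgebra.toSubmodule (IncAlg K X) := by
  ext f
  simp only [Jm_eq_supportedOn, mem_supportedOn, zero_le, and_true]
  rfl

lemma Jm_one : Jm K X 1 = supportedOn K (· < ·) := by
  simp only [Jm_eq_supportedOn, le_and_one_le_chainLen_iff]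

lemma radJ_eq_Jm_one : radJ K X = Jm K X 1 := by
  rw [Jm_one, radJ, ← Submodule.span_eq (supportedOn K (· < ·))]
  congr
  ext f
  refine ⟨fun ⟨hf, hdiag⟩ x y hxy => ?_, fun hf => ⟨fun x y h => hf x y (h ∘ le_of_lt),
    fun x => hf x x (lt_irrefl x)⟩⟩
  by_cases hle : x ≤ y
  · rw [hle.eq_of_not_lt hxy]
    exact hdiag y
  · exact hf x y hle

lemma mul_mem_Jm {a b : ℕ} {f g : Matrix X X K} (hf : f ∈ Jm K X a) (hg : g ∈ Jm K X b) :
    f * g ∈ Jm K X (a + b) := by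
  rw [Jm_eq_supportedOn] at hf hg ⊢
  exact mul_mem_supportedOn (fun x k y ⟨hxk, ha⟩ ⟨hky, hb⟩ =>
    ⟨hxk.trans hky, (add_le_add ha hb).trans (chainLen_add_chainLen_le hxk hky)⟩) hf hg

lemma span_mul_Jm_one (n : ℕ) :
    Submodule.span K {c | ∃ f ∈ Jm K X 1, ∃ g ∈ Jm K X n, c = f * g} = Jm K X (n + 1) := by
  refine le_antisymm (Submodule.span_le.mpr ?_) (Jm_le fun x y hxy h => ?_)
  · rintro _ ⟨f, hf, g, hg, rfl⟩
    exact add_comm 1 n ▸ mul_mem_Jm hf hg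
  obtain ⟨k, hxk, hky, hn⟩ := exists_lt_le_chainLen hxy h
  refine Submodule.subset_span ⟨_, single_one_mem_Jm hxk.le (one_le_chainLen hxk), _,
    single_one_mem_Jm hky hn, ?_⟩
  rw [single_mul_single_same, one_mul]

lemma span_commutator_Jm_one (n : ℕ) :
    Submodule.span K {c | ∃ f ∈ Jm K X 1, ∃ g ∈ Jm K X n, c = f * g - g * f} =
      Jm K X (n + 1) := by
  refine le_antisymm (Submodule.span_le.mpr ?_) (Jm_le fun x y hxy h => ?_)
  · rintro _ ⟨f, hf, g, hg, rfl⟩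
    exact Submodule.sub_mem _ (add_comm 1 n ▸ mul_mem_Jm hf hg) (mul_mem_Jm hg hf)
  obtain ⟨k, hxk, hky, hn⟩ := exists_lt_le_chainLen hxy h
  refine Submodule.subset_span ⟨_, single_one_mem_Jm hxk.le (one_le_chainLen hxk), _,
    single_one_mem_Jm hky hn, ?_⟩
  rw [single_mul_single_same, one_mul,
    single_mul_single_of_ne _ _ _ _ (hxk.trans_le hky).ne', sub_zero]

lemma mul_apply_self_of_mem_IncAlg {f g : Matrix X X K} (hf : f ∈ IncAlg K X)
    (hg : g ∈ IncAlg K X) (x : X) : (f * g) x x = f x x * g x x := by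
  rw [mul_apply]
  refine Finset.sum_eq_single x (fun k _ hkx => ?_) (by simp)
  by_cases hxk : x ≤ k
  · rw [hg k x fun hkx' => hkx (le_antisymm hkx' hxk), mul_zero]
  · rw [hf x k hxk, zero_mul]

lemma lcs_zero_eq_Jm_one : lcs K X 0 = Jm K X 1 := by
  rw [lcs]
  refine le_antisymm (Submodule.span_le.mpr ?_) ?_
  · rintro _ ⟨f, hf, g, hg, rfl⟩
    rw [SetLike.mem_coe, Jm_one]
    intro x y hxy
    by_cases hle : x ≤ y
    · rw [hle.eq_of_not_lt hxy, Matrix.sub_apply, mul_apply_self_of_mem_IncAlg hf hg,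
        mul_apply_self_of_mem_IncAlg hg hf, mul_comm, sub_self]
    · rw [Matrix.sub_apply, (IncAlg K X).mul_mem hf hg x y hle,
        (IncAlg K X).mul_mem hg hf x y hle, sub_self]
  · rw [← span_commutator_Jm_one 0, Jm_zero]
    refine Submodule.span_mono fun _ ⟨f, hf, g, hg, hc⟩ => ⟨f, ?_, g, hg, hc⟩
    rw [← Subalgebra.mem_toSubmodule, ← Jm_zero]
    exact Jm_antitone zero_le_one hf

lemma lcs_eq_Jm (n : ℕ) : lcs K X n = Jm K X (n + 1) := by
  induction n with
  | zero => exact lcs_zero_eq_Jm_one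
  | succ n ih => rw [lcs.eq_2, lcs_zero_eq_Jm_one, ih, span_commutator_Jm_one]

lemma radPow_eq_Jm (n : ℕ) : radPow K X n = Jm K X n := by
  induction n with
  | zero => exact Jm_zero.symm
  | succ n ih => rw [radPow.eq_2, radJ_eq_Jm_one, ih, span_mul_Jm_one]

end IncidenceAlgebra

/-- for each `m ≥ 1`, `J_m = Span_K{e_{xy} : l(⌊x,y⌋) ≥ m}` and
`J_m = J(I(X,K))^m`. -/
theorem stmt2 (m : ℕ) (hm : 1 ≤ m) :
    lcs K X (m - 1) = Jm K X m ∧ lcs K X (m - 1) = radPow K X m := by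
  obtain ⟨n, rfl⟩ := Nat.exists_eq_add_of_le' hm
  rw [Nat.add_sub_cancel, lcs_eq_Jm, radPow_eq_Jm]
  exact ⟨rfl, rfl⟩
end

section
/- Every Lie ideal of I(X,K) contained in J(I(X,K)) is spanned as a K-vector space by the standard basis elements e_{xy} it contains. -/
set_option maxHeartbeats 1000000
set_option synthInstance.maxHeartbeats 400000

open Matrix

variable (K X : Type*) [Field K] [Fintype X] [PartialOrder X] [DecidableEq X]

/-!
Conjugating `f` by the diagonal idempotents isolates its entries: for `x ≠ y`,
`⁅e_xx, ⁅e_yy, f⁆⁆ = -f(x,y) e_xy - f(y,x) e_yx`, and for `f ∈ I(X,K)` with `x < y` the second term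
vanishes. So a Lie ideal contains `f(x,y) e_xy` for every off-diagonal entry of each of its
elements, while elements of `J(I(X,K))` have no diagonal entries.
-/

open Matrix

theorem Matrix.lie_single_lie_single {n R : Type*} [Fintype n] [DecidableEq n] [Ring R]
    (f : Matrix n n R) {x y : n} (hxy : x ≠ y) :
    ⁅single x x (1 : R), ⁅single y y (1 : R), f⁆⁆ = -single x y (f x y) - single y x (f y x) := by
  simp only [Ring.lie_def, mul_sub, sub_mul, ← mul_assoc, single_mul_single_of_ne _ _ _ _ hxy,
    single_mul_mul_single, one_mul, mul_one, zero_mul]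
  rw [mul_assoc f, single_mul_single_of_ne _ _ _ _ hxy.symm, mul_zero]
  abel

theorem mem_radJ_iff {f : Matrix X X K} :
    f ∈ radJ K X ↔ f ∈ IncAlg K X ∧ ∀ x : X, f x x = 0 := by
  refine ⟨fun hf => ?_, fun hf => Submodule.subset_span hf⟩
  induction hf using Submodule.span_induction with
  | mem f hf => exact hf
  | zero => exact ⟨zero_mem _, fun _ => rfl⟩
  | add f g _ _ hf hg =>
    exact ⟨add_mem hf.1 hg.1, fun x => by simp [hf.2 x, hg.2 x]⟩
  | smul c f _ hf =>
    exact ⟨Subalgebra.smul_mem _ hf.1 c, fun x => by simp [hf.2 x]⟩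

section

variable {K X}

theorem single_one_mem_incAlg {x y : X} (h : x ≤ y) : single x y (1 : K) ∈ IncAlg K X :=
  (eE K x y h).2

theorem single_apply_mem_of_lie {I : Submodule K (Matrix X X K)}
    (hLie : ∀ f ∈ IncAlg K X, ∀ g ∈ I, f * g - g * f ∈ I) {f : Matrix X X K} (hf : f ∈ I)
    (hfInc : f ∈ IncAlg K X) {x y : X} (hlt : x < y) : single x y (f x y) ∈ I := by
  have h : ⁅single x x (1 : K), ⁅single y y (1 : K), f⁆⁆ ∈ I :=
    hLie _ (single_one_mem_incAlg le_rfl) _ (hLie _ (single_one_mem_incAlg le_rfl) f hf)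
  rwa [lie_single_lie_single f hlt.ne, hfInc y x hlt.not_ge, single_zero, sub_zero,
    neg_mem_iff] at h

theorem single_mem_span_of_mem {Y : Type*} [Preorder Y] [DecidableEq Y]
    {I : Submodule K (Matrix Y Y K)} {x y : Y} (hxy : x ≤ y) {c : K} (hc : single x y c ∈ I) :
    single x y c ∈ Submodule.span K
      {E : Matrix Y Y K | (∃ x y : Y, x ≤ y ∧ E = single x y (1 : K)) ∧ E ∈ I} := by
  rcases eq_or_ne c 0 with rfl | hc0
  · simp
  have hone : single x y (1 : K) ∈ I := by
    simpa [smul_single, hc0] using I.smul_mem c⁻¹ hc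
  rw [← mul_one c, ← smul_eq_mul, ← smul_single]
  exact Submodule.smul_mem _ _ (Submodule.subset_span ⟨⟨x, y, hxy, rfl⟩, hone⟩)

end

/-- every Lie ideal of `I(X,K)` contained in `J(I(X,K))` is spanned by the
standard basis elements it contains. -/
theorem stmt6 (I : Submodule K (Matrix X X K)) (hIJ : I ≤ radJ K X)
    (hLie : ∀ f ∈ IncAlg K X, ∀ g ∈ I, f * g - g * f ∈ I) :
    I = Submodule.span K {E : Matrix X X K |
        (∃ x y : X, x ≤ y ∧ E = Matrix.single x y (1 : K)) ∧ E ∈ I} := by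
  refine le_antisymm (fun f hf => ?_) (Submodule.span_le.2 fun E hE => hE.2)
  obtain ⟨hfInc, hfDiag⟩ := (mem_radJ_iff K X).1 (hIJ hf)
  rw [matrix_eq_sum_single f]
  refine sum_mem fun x _ => sum_mem fun y _ => ?_
  rcases eq_or_ne x y with rfl | hxy
  · simp [hfDiag]
  by_cases hle : x ≤ y
  · exact single_mem_span_of_mem hle (single_apply_mem_of_lie hLie hf hfInc (hle.lt_of_ne hxy))
  · simp [hfInc x y hle]
end
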